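/- Let T ∈ T^(m)(n) and let X be a maximal cadet sequence of T. Then the contribution of X equals the product of the contributions of the S-connected cadet sequences into which X is partitioned. -/

import Mathlib

open scoped Classical

/-- The derived sets `S⁻ᵢⱼ` of nonnegative integers:
for `i < j`, `S⁻ᵢⱼ = {s ≥ 0 : -s ∈ Sᵢⱼ}`, and `S⁻ⱼᵢ = {0} ∪ {s > 0 : s ∈ Sᵢⱼ}`. -/
def Sminus {n : ℕ} (S : Fin n → Fin n → Finset ℤ) (i j : Fin n) : Set ℕ :=
  if i < j then {s : ℕ | -(s : ℤ) ∈ S i j}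
  else {0} ∪ {s : ℕ | 0 < s ∧ (s : ℤ) ∈ S j i}

/-- `m`: the maximal absolute value of an element of some `S i j` (`i < j`). -/
def mOf {n : ℕ} (S : Fin n → Fin n → Finset ℤ) : ℕ :=
  Finset.univ.sup fun p : Fin n × Fin n =>
    if p.1 < p.2 then (S p.1 p.2).sup (fun s => s.natAbs) else 0

/-- A rooted labeled plane tree with `n` nodes (labeled by `Fin n`, index `i` representing
the label `i+1`, so the node `1` is `(0 : Fin n)`), each node having exactly `m+1`
linearly ordered children; children that are not nodes are unlabeled leaves and carry no
further data. `parent v` is the parent node of the node `v` (with the convention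
`parent root = root`), and `pos v` is the position of `v` among the `m+1` children of its
parent, so `(pos v : ℕ)` is the number `lsib v` of left siblings of `v`. -/
structure PlaneTree (n m : ℕ) where
  root : Fin n
  parent : Fin n → Fin n
  pos : Fin n → Fin (m + 1)
  parent_root : parent root = root
  reaches_root : ∀ v : Fin n, ∃ k : ℕ, parent^[k] v = root
  pos_inj : ∀ v w : Fin n, v ≠ root → w ≠ root → parent v = parent w → pos v = pos w → v = w

namespace PlaneTree

variable {n m : ℕ}

/-- `v` is a child of `u` (among the nodes). -/
def IsChild (T : PlaneTree n m) (v u : Fin n) : Prop :=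
  v ≠ T.root ∧ T.parent v = u

/-- `v` is the cadet of `u`: the rightmost child of `u` that is a node. -/
def IsCadet (T : PlaneTree n m) (u v : Fin n) : Prop :=
  T.IsChild v u ∧ ∀ w : Fin n, T.IsChild w u → T.pos w ≤ T.pos v

/-- The number of left siblings of `v`. -/
def lsib (T : PlaneTree n m) (v : Fin n) : ℕ := (T.pos v : ℕ)

end PlaneTree

/-- `(v a, v (a+1), …, v b)` is a cadet sequence of `T` (1-indexed, `1 ≤ a ≤ b`). -/
def IsCadetWindow {n m : ℕ} (T : PlaneTree n m) (v : ℕ → Fin n) (a b : ℕ) : Prop :=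
  1 ≤ a ∧ a ≤ b ∧ ∀ p : ℕ, a < p → p ≤ b → T.IsCadet (v (p - 1)) (v p)

/-- `v` is injective on the indices `a, …, b`. -/
def WindowInj {n : ℕ} (v : ℕ → Fin n) (a b : ℕ) : Prop :=
  ∀ p q : ℕ, a ≤ p → p ≤ b → a ≤ q → q ≤ b → v p = v q → p = q

/-- `(v a, …, v b)` is an `S`-cadet sequence of `T`. -/
def IsSCadetWindow {n m : ℕ} (S : Fin n → Fin n → Finset ℤ) (T : PlaneTree n m)
    (v : ℕ → Fin n) (a b : ℕ) : Prop :=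
  IsCadetWindow T v a b ∧
    ∀ i j : ℕ, a ≤ i → i < j → j ≤ b →
      (∑ p ∈ Finset.Icc (i + 1) j, T.lsib (v p)) ∉ Sminus S (v i) (v j)

/-- `(v 1, …, v k)` is a maximal cadet sequence of `T`: all children of `v k` are
leaves, and no node has `v 1` as its cadet. -/
def IsMaxCadetSeq {n m : ℕ} (T : PlaneTree n m) (k : ℕ) (v : ℕ → Fin n) : Prop :=
  IsCadetWindow T v 1 k ∧ (∀ w : Fin n, ¬ T.IsChild w (v k)) ∧ ∀ u : Fin n, ¬ T.IsCadet u (v 1)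

/-- `(v a, …, v b)` is a maximal `S`-cadet sequence inside the ambient cadet sequence
`(v 1, …, v k)`. -/
def IsMaxSCadetWindow {n m : ℕ} (S : Fin n → Fin n → Finset ℤ) (T : PlaneTree n m)
    (k : ℕ) (v : ℕ → Fin n) (a b : ℕ) : Prop :=
  b ≤ k ∧ IsSCadetWindow S T v a b ∧
    (a = 1 ∨ ¬ IsSCadetWindow S T v (a - 1) b) ∧
    (b = k ∨ ¬ IsSCadetWindow S T v a (b + 1))

/-- `Y` is (the set of nodes of) a maximal `S`-cadet sequence of `T`. -/
def IsMaxSCadetSet {n m : ℕ} (S : Fin n → Fin n → Finset ℤ) (T : PlaneTree n m)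
    (Y : Finset (Fin n)) : Prop :=
  ∃ (k : ℕ) (v : ℕ → Fin n) (a b : ℕ), IsMaxCadetSeq T k v ∧ WindowInj v 1 k ∧
    IsMaxSCadetWindow S T k v a b ∧ Y = (Finset.Icc a b).image v

/-- `Y` is (the set of nodes of) a nonempty cadet sequence of `T`. -/
def IsCadetSeqSet {n m : ℕ} (T : PlaneTree n m) (Y : Finset (Fin n)) : Prop :=
  ∃ (k : ℕ) (v : ℕ → Fin n), IsCadetWindow T v 1 k ∧ WindowInj v 1 k ∧
    Y = (Finset.Icc 1 k).image v

/-- `X` is (the set of nodes of) an `S`-connected cadet sequence of `T`: it is a cadet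
sequence, every maximal `S`-cadet sequence is disjoint from it or contained in it, and no
cadet sequence with this property is properly contained in it. -/
def SConnected {n m : ℕ} (S : Fin n → Fin n → Finset ℤ) (T : PlaneTree n m)
    (X : Finset (Fin n)) : Prop :=
  IsCadetSeqSet T X ∧
    (∀ Y, IsMaxSCadetSet S T Y → X ∩ Y = ∅ ∨ Y ⊆ X) ∧
    ∀ X', IsCadetSeqSet T X' → (∀ Y, IsMaxSCadetSet S T Y → X' ∩ Y = ∅ ∨ Y ⊆ X') →
      X' ⊆ X → X' = X

/-- `Y` is (the set of nodes of) an `S`-cadet sequence of `T` (a possible box). -/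
def IsSBox {n m : ℕ} (S : Fin n → Fin n → Finset ℤ) (T : PlaneTree n m)
    (Y : Finset (Fin n)) : Prop :=
  ∃ (k : ℕ) (v : ℕ → Fin n), IsSCadetWindow S T v 1 k ∧ WindowInj v 1 k ∧
    Y = (Finset.Icc 1 k).image v

/-- `B` is an `S`-boxing of the set of nodes `X`: a partition of `X` into
`S`-cadet sequences. -/
def IsSBoxingOf {n m : ℕ} (S : Fin n → Fin n → Finset ℤ) (T : PlaneTree n m)
    (X : Finset (Fin n)) (B : Finset (Finset (Fin n))) : Prop :=
  (∀ Y ∈ B, IsSBox S T Y ∧ Y ⊆ X) ∧ ∀ u ∈ X, ∃! Y, Y ∈ B ∧ u ∈ Y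

/-- The contribution `r_S(X)` of a cadet sequence with (injective) node set `X`
(whose length is `X.card`): `∑_{B ∈ U_S(X)} (-1)^(|X| - |B|)`. -/
noncomputable def contrib {n m : ℕ} (S : Fin n → Fin n → Finset ℤ) (T : PlaneTree n m)
    (X : Finset (Fin n)) : ℤ :=
  ∑ B : Finset (Finset (Fin n)),
    if IsSBoxingOf S T X B then (-1 : ℤ) ^ (X.card - B.card) else 0

/-- The contribution `r_S(T) = ∑_{B ∈ U_S(T)} (-1)^(n - |B|)` of the tree `T`. -/
noncomputable def treeContrib {n m : ℕ} (S : Fin n → Fin n → Finset ℤ)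
    (T : PlaneTree n m) : ℤ :=
  contrib S T Finset.univ

/-- The tuple `S` is transitive. -/
def TransitiveS {n : ℕ} (S : Fin n → Fin n → Finset ℤ) : Prop :=
  ∀ i j k : Fin n, i ≠ j → j ≠ k → i ≠ k →
    ∀ s t : ℕ, s ∉ Sminus S i j → t ∉ Sminus S j k → s + t ∉ Sminus S i k

/-- The arrangement `A_S` is almost transitive (`(i : ℕ) = 0` encodes "`i` is the node `1`"). -/
def AlmostTransitive {n : ℕ} (S : Fin n → Fin n → Finset ℤ) : Prop :=
  ∀ i j k : Fin n, i ≠ j → j ≠ k → i ≠ k → (i : ℕ) ≠ 0 → (k : ℕ) ≠ 0 →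
    ∀ s t : ℕ, s ∉ Sminus S i j → t ∉ Sminus S j k → s + t ∉ Sminus S i k

/-- `A_S` is an Ish-type arrangement: `0 ∈ Sᵢⱼ` for all `i < j`, and `Sᵢⱼ = {0}`
whenever `1 < i < j`. -/
def IshType {n : ℕ} (S : Fin n → Fin n → Finset ℤ) : Prop :=
  (∀ i j : Fin n, i < j → (0 : ℤ) ∈ S i j) ∧
    ∀ i j : Fin n, 0 < (i : ℕ) → i < j → S i j = {0}

/-- `A_S` is a nested Ish arrangement. -/
def NestedIsh {n : ℕ} (S : Fin n → Fin n → Finset ℤ) : Prop :=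
  IshType S ∧ ∀ i j k : Fin n, (i : ℕ) = 0 → 0 < (j : ℕ) → j < k → S i j ⊆ S i k

/-- The lower inefficiency `E_l(T)`: the number of lower inefficient nodes of `T`,
i.e. nodes `w` that are left siblings of the node `1` with `lsib w ∉ S⁻_{w,1}`. -/
noncomputable def Elow {n m : ℕ} [NeZero n] (S : Fin n → Fin n → Finset ℤ)
    (T : PlaneTree n m) : ℕ :=
  (Finset.univ.filter fun w : Fin n =>
    w ≠ T.root ∧ (0 : Fin n) ≠ T.root ∧ T.parent w = T.parent 0 ∧ T.pos w < T.pos 0 ∧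
      T.lsib w ∉ Sminus S w 0).card

/-- The upper inefficiency `E_u(T)`: the number of upper inefficient nodes of `T`,
i.e. nodes `w` with parent the node `1` that are not the cadet of `1`, with
`lsib w ∉ S⁻_{1,w}`. -/
noncomputable def Eup {n m : ℕ} [NeZero n] (S : Fin n → Fin n → Finset ℤ)
    (T : PlaneTree n m) : ℕ :=
  (Finset.univ.filter fun w : Fin n =>
    T.IsChild w 0 ∧ ¬ T.IsCadet 0 w ∧ T.lsib w ∉ Sminus S 0 w).card

/-- The class `S(e_l, ℓ_l, e_u, ℓ_u)` of trees in `T^(m)(n)` with nonzero contribution,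
lower/upper inefficiencies `e_l, e_u` and lower/upper 1-lengths `ℓ_l, ℓ_u` (the latter
expressed via the maximal `S`-cadet sequence `{v_{j-ℓ_l}, …, v_j, …, v_{j+ℓ_u}}`
around the node `1 = v j` inside its maximal cadet sequence `(v 1, …, v t)`). -/
def ClassS {n : ℕ} [NeZero n] (S : Fin n → Fin n → Finset ℤ) (el ll eu lu : ℕ) :
    Set (PlaneTree n (mOf S)) :=
  {T | treeContrib S T ≠ 0 ∧ Elow S T = el ∧ Eup S T = eu ∧
    ∃ (t : ℕ) (v : ℕ → Fin n) (j : ℕ), IsMaxCadetSeq T t v ∧ WindowInj v 1 t ∧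
      1 ≤ j ∧ j ≤ t ∧ v j = 0 ∧ ll < j ∧ j + lu ≤ t ∧
      IsMaxSCadetWindow S T t v (j - ll) (j + lu)}

/-- The complement in `ℝ^n` of the union of the hyperplanes `xᵢ - xⱼ = s`
(`i < j`, `s ∈ S i j`) of the arrangement `A_S`. -/
def complementSet {n : ℕ} (S : Fin n → Fin n → Finset ℤ) : Set (Fin n → ℝ) :=
  {x | ∀ i j : Fin n, i < j → ∀ s ∈ S i j, x i - x j ≠ (s : ℝ)}

/-- The number of regions `r_S` of the arrangement `A_S`: the number of connected
components of the complement of its hyperplanes. -/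
noncomputable def numRegions {n : ℕ} (S : Fin n → Fin n → Finset ℤ) : ℕ :=
  Nat.card (ConnectedComponents ↥(complementSet S))

/-- A rooted labeled plane tree with `n` nodes and arbitrary numbers of children:
`nchild u` is the total number of (linearly ordered) children of the node `u`, and
`pos v` the position of the node `v` among the children of its parent (so
`lsib v = pos v` and `rsib v = nchild (parent v) - 1 - pos v`). Children not occupied
by nodes are unlabeled leaves. -/
structure LPTree (n : ℕ) where
  root : Fin n
  parent : Fin n → Fin n
  pos : Fin n → ℕ
  nchild : Fin n → ℕ
  parent_root : parent root = root
  reaches_root : ∀ v : Fin n, ∃ k : ℕ, parent^[k] v = root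
  pos_lt : ∀ v : Fin n, v ≠ root → pos v < nchild (parent v)
  pos_inj : ∀ v w : Fin n, v ≠ root → w ≠ root → parent v = parent w → pos v = pos w → v = w

/-- Membership in the set `𝔗(S)`: the root is the node `1`, the node `1` has `2m+2`
children, every other node has exactly one child, and every node `k ≠ 1` satisfies
`lsib k ∈ S⁻₁ₖ` or `rsib k ∈ S⁻ₖ₁`. -/
def IsFrakT {n : ℕ} [NeZero n] (S : Fin n → Fin n → Finset ℤ) (T : LPTree n) : Prop :=
  T.root = 0 ∧ T.nchild 0 = 2 * mOf S + 2 ∧ (∀ v : Fin n, v ≠ 0 → T.nchild v = 1) ∧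
    ∀ v : Fin n, v ≠ 0 →
      (T.pos v ∈ Sminus S 0 v ∨ (T.nchild (T.parent v) - 1 - T.pos v) ∈ Sminus S v 0)

/-- For an `S`-connected cadet sequence `(v 1, …, v k)` whose maximal `S`-cadet
sequences are the windows `[a r, b r]` (`1 ≤ r ≤ k'`, in increasing order of last index),
`LastIdx a b k' j` is the index of the largest-indexed node of `X_j \ X_{j+1}`
(with `X_{k'+1} = {0}` containing no node of the sequence). -/
def LastIdx (a b : ℕ → ℕ) (k' j : ℕ) : ℕ :=
  ((Finset.Icc (a j) (b j)) \
    (if j = k' then (∅ : Finset ℕ) else Finset.Icc (a (j + 1)) (b (j + 1)))).sup id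

/-- `X_i` reaches `X_j`: the parent of the largest-indexed node of `X_j \ X_{j+1}`
belongs to `X_i`, with the conventions `X_0 = {0}`, `parent (v 1) = 0`
(the index `0` plays the role of `X_0`). -/
def Reaches (a b : ℕ → ℕ) (k' i j : ℕ) : Prop :=
  i < j ∧ j ≤ k' ∧
    ((i = 0 ∧ LastIdx a b k' j = 1) ∨
      (1 ≤ i ∧ 2 ≤ LastIdx a b k' j ∧ a i ≤ LastIdx a b k' j - 1 ∧
        LastIdx a b k' j - 1 ≤ b i))

/-- A successful run of the algorithm: `idx 0 = 0`; at each step, the next term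
`idx (j+1)` is the smallest-indexed maximal `S`-cadet sequence reached by `X_{idx j}`
but not reached by any `X_{idx l}` with `l < j`; the run terminates at `k'`
after `t` steps. -/
def AlgRun (a b : ℕ → ℕ) (k' t : ℕ) (idx : ℕ → ℕ) : Prop :=
  idx 0 = 0 ∧ idx t = k' ∧ (∀ j, j < t → idx j ≠ k') ∧
    ∀ j, j < t →
      Reaches a b k' (idx j) (idx (j + 1)) ∧
        (∀ l, l < j → ¬ Reaches a b k' (idx l) (idx (j + 1))) ∧
        ∀ r, r < idx (j + 1) → Reaches a b k' (idx j) r → ∃ l, l < j ∧ Reaches a b k' (idx l) r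

/-- Condition (2) of Proposition 4.5 (with lower 1-length `i` and upper 1-length `k`),
for the maximal cadet sequence `(v 1, …, v t)` containing the node `1 = v j`. -/
def Cond9 {n m : ℕ} (S : Fin n → Fin n → Finset ℤ) (T : PlaneTree n m)
    (t : ℕ) (v : ℕ → Fin n) (j i k : ℕ) : Prop :=
  i < j ∧ k ≤ t - j ∧
    (∀ s : ℕ, 1 ≤ s → s ≤ t → (s < j - i - 1 ∨ j + k + 1 < s) →
      IsMaxSCadetWindow S T t v s s) ∧
    IsMaxSCadetWindow S T t v (j - i) (j + k) ∧
    (j - i ≠ 1 → IsMaxSCadetWindow S T t v (j - i - 1) (j - 1)) ∧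
    (j - i = 1 → i = 0) ∧
    (j + k ≠ t → IsMaxSCadetWindow S T t v (j + 1) (j + k + 1)) ∧
    (j + k = t → k = 0) ∧
    ∀ a' b' : ℕ, IsMaxSCadetWindow S T t v a' b' →
      ((a' = b' ∧ (a' < j - i - 1 ∨ j + k + 1 < a')) ∨ (a' = j - i ∧ b' = j + k) ∨
        (j - i ≠ 1 ∧ a' = j - i - 1 ∧ b' = j - 1) ∨ (j + k ≠ t ∧ a' = j + 1 ∧ b' = j + k + 1))


/-!
An `S`-boxing of a maximal cadet sequence `X` is a partition of `X` into `S`-cadet sequences.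
Each block is a window of `X`, hence lies in a maximal `S`-cadet sequence, hence in a single
`S`-connected part of `X`. So the boxings of `X` are exactly the unions of boxings of its parts,
and the sign `(-1)^(|X| - |B|)` is multiplicative over such unions.
-/

open Finset

theorem Finset.disjoint_image_of_injOn {α β : Type*} [DecidableEq α] [DecidableEq β]
    {f : α → β} {s t u : Finset α} (hf : Set.InjOn f u) (hs : s ⊆ u) (ht : t ⊆ u)
    (hd : Disjoint s t) : Disjoint (s.image f) (t.image f) := by
  rw [disjoint_iff_inter_eq_empty, ← image_inter_of_injOn s t
      (hf.mono (Set.union_subset (coe_subset.mpr hs) (coe_subset.mpr ht))),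
    disjoint_iff_inter_eq_empty.mp hd, image_empty]

theorem PlaneTree.IsCadet.unique {n m : ℕ} {T : PlaneTree n m} {u x y : Fin n}
    (hx : T.IsCadet u x) (hy : T.IsCadet u y) : x = y :=
  T.pos_inj x y hx.1.1 hy.1.1 (hx.1.2.trans hy.1.2.symm) (le_antisymm (hy.2 x hx.1) (hx.2 y hy.1))

section Boxing

variable {n m : ℕ} {S : Fin n → Fin n → Finset ℤ} {T : PlaneTree n m}

theorem IsSBox.nonempty {Y : Finset (Fin n)} (h : IsSBox S T Y) : Y.Nonempty := by
  obtain ⟨k, v, hw, -, rfl⟩ := h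
  exact ⟨v 1, mem_image_of_mem v (mem_Icc.mpr ⟨le_rfl, hw.1.2.1⟩)⟩

namespace IsSBoxingOf

variable {X X' X'' : Finset (Fin n)} {B B' B'' : Finset (Finset (Fin n))}

theorem pairwiseDisjoint (h : IsSBoxingOf S T X B) :
    (B : Set (Finset (Fin n))).PairwiseDisjoint id := by
  intro Y₁ h₁ Y₂ h₂ hne
  refine disjoint_left.mpr fun u hu₁ hu₂ => hne ?_
  obtain ⟨Y, -, hY⟩ := h.2 u ((h.1 Y₁ h₁).2 hu₁)
  exact (hY Y₁ ⟨h₁, hu₁⟩).trans (hY Y₂ ⟨h₂, hu₂⟩).symm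

theorem card_le (h : IsSBoxingOf S T X B) : #B ≤ #X :=
  calc #B ≤ #(B.biUnion id) :=
        card_le_card_biUnion h.pairwiseDisjoint fun Y hY => (h.1 Y hY).1.nonempty
    _ ≤ #X := card_le_card (biUnion_subset.mpr fun Y hY => (h.1 Y hY).2)

theorem eq_empty_of_empty (h : IsSBoxingOf S T ∅ B) : B = ∅ :=
  eq_empty_of_forall_notMem fun Y hY =>
    let ⟨_, hu⟩ := (h.1 Y hY).1.nonempty
    notMem_empty _ ((h.1 Y hY).2 hu)

theorem union (hd : Disjoint X' X'') (h' : IsSBoxingOf S T X' B')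
    (h'' : IsSBoxingOf S T X'' B'') : IsSBoxingOf S T (X' ∪ X'') (B' ∪ B'') := by
  refine ⟨fun Y hY => ?_, fun u hu => ?_⟩
  · rcases mem_union.mp hY with hY | hY
    · exact ⟨(h'.1 Y hY).1, (h'.1 Y hY).2.trans subset_union_left⟩
    · exact ⟨(h''.1 Y hY).1, (h''.1 Y hY).2.trans subset_union_right⟩
  rcases mem_union.mp hu with hu | hu
  · obtain ⟨Y, hY, huniq⟩ := h'.2 u hu
    refine ⟨Y, ⟨mem_union_left _ hY.1, hY.2⟩, fun Z ⟨hZ, huZ⟩ => huniq Z ⟨?_, huZ⟩⟩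
    exact (mem_union.mp hZ).resolve_right fun hZ => disjoint_left.mp hd hu ((h''.1 Z hZ).2 huZ)
  · obtain ⟨Y, hY, huniq⟩ := h''.2 u hu
    refine ⟨Y, ⟨mem_union_right _ hY.1, hY.2⟩, fun Z ⟨hZ, huZ⟩ => huniq Z ⟨?_, huZ⟩⟩
    exact (mem_union.mp hZ).resolve_left fun hZ => disjoint_right.mp hd hu ((h'.1 Z hZ).2 huZ)

theorem filter_subset_left (hd : Disjoint X' X'') (h : IsSBoxingOf S T (X' ∪ X'') B)
    (hsplit : ∀ Y ∈ B, Y ⊆ X' ∨ Y ⊆ X'') : IsSBoxingOf S T X' (B.filter (· ⊆ X')) := by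
  refine ⟨fun Y hY => ⟨(h.1 Y (mem_filter.mp hY).1).1, (mem_filter.mp hY).2⟩,
    fun u hu => ?_⟩
  obtain ⟨Y, ⟨hYB, huY⟩, huniq⟩ := h.2 u (mem_union_left _ hu)
  have hYX' : Y ⊆ X' :=
    (hsplit Y hYB).resolve_right fun hYX'' => disjoint_left.mp hd hu (hYX'' huY)
  exact ⟨Y, ⟨mem_filter.mpr ⟨hYB, hYX'⟩, huY⟩,
    fun Z ⟨hZ, huZ⟩ => huniq Z ⟨(mem_filter.mp hZ).1, huZ⟩⟩

theorem filter_subset_self (h : IsSBoxingOf S T X B) : B.filter (· ⊆ X) = B :=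
  filter_true_of_mem fun Y hY => (h.1 Y hY).2

theorem filter_subset_of_disjoint (h : IsSBoxingOf S T X'' B'') (hd : Disjoint X' X'') :
    B''.filter (· ⊆ X') = ∅ :=
  filter_false_of_mem fun Y hY hYX' =>
    let ⟨_, hu⟩ := (h.1 Y hY).1.nonempty
    disjoint_left.mp hd (hYX' hu) ((h.1 Y hY).2 hu)

theorem disjoint_of_disjoint (h' : IsSBoxingOf S T X' B') (h'' : IsSBoxingOf S T X'' B'')
    (hd : Disjoint X' X'') : Disjoint B' B'' :=
  disjoint_left.mpr fun Y hY' hY'' =>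
    let ⟨_, hu⟩ := (h'.1 Y hY').1.nonempty
    disjoint_left.mp hd ((h'.1 Y hY').2 hu) ((h''.1 Y hY'').2 hu)

end IsSBoxingOf

theorem contrib_empty : contrib S T ∅ = 1 := by
  have hB : ∀ B, IsSBoxingOf S T ∅ B ↔ B = ∅ := fun B =>
    ⟨IsSBoxingOf.eq_empty_of_empty, fun hB => hB ▸ ⟨by simp, by simp⟩⟩
  simp [contrib, hB]

theorem contrib_union {X' X'' : Finset (Fin n)} (hd : Disjoint X' X'')
    (hsplit : ∀ Y, IsSBox S T Y → Y ⊆ X' ∪ X'' → Y ⊆ X' ∨ Y ⊆ X'') :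
    contrib S T (X' ∪ X'') = contrib S T X' * contrib S T X'' := by
  simp only [contrib, ← sum_filter, sum_mul_sum, ← sum_product']
  symm
  refine sum_nbij' (fun p => p.1 ∪ p.2) (fun B => (B.filter (· ⊆ X'), B.filter (· ⊆ X'')))
    ?_ ?_ ?_ ?_ ?_
  · rintro ⟨B', B''⟩ hp
    simp only [mem_product, mem_filter, mem_univ, true_and] at hp ⊢
    exact hp.1.union hd hp.2
  · intro B hB
    simp only [mem_product, mem_filter, mem_univ, true_and] at hB ⊢
    have hsplitB : ∀ Y ∈ B, Y ⊆ X' ∨ Y ⊆ X'' := fun Y hY =>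
      hsplit Y (hB.1 Y hY).1 (hB.1 Y hY).2
    exact ⟨hB.filter_subset_left hd hsplitB,
      (union_comm X' X'' ▸ hB).filter_subset_left hd.symm fun Y hY => (hsplitB Y hY).symm⟩
  · rintro ⟨B', B''⟩ hp
    simp only [mem_product, mem_filter, mem_univ, true_and] at hp
    rw [filter_union, filter_union, hp.1.filter_subset_self, hp.2.filter_subset_self,
      hp.1.filter_subset_of_disjoint hd.symm, hp.2.filter_subset_of_disjoint hd, union_empty,
      empty_union]
  · intro B hB
    simp only [mem_filter, mem_univ, true_and] at hB
    rw [filter_union_right, filter_true_of_mem fun Y hY => hsplit Y (hB.1 Y hY).1 (hB.1 Y hY).2]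
  · rintro ⟨B', B''⟩ hp
    simp only [mem_product, mem_filter, mem_univ, true_and] at hp
    have := hp.1.card_le
    have := hp.2.card_le
    rw [card_union_of_disjoint hd, card_union_of_disjoint (hp.1.disjoint_of_disjoint hp.2 hd),
      ← pow_add]
    dsimp only
    congr 1
    omega

theorem contrib_biUnion {ι : Type*} [DecidableEq ι] {J : Finset ι} {X : ι → Finset (Fin n)}
    (hd : (J : Set ι).PairwiseDisjoint X)
    (hbox : ∀ Y, IsSBox S T Y → Y ⊆ J.biUnion X → ∃ j ∈ J, Y ⊆ X j) :
    contrib S T (J.biUnion X) = ∏ j ∈ J, contrib S T (X j) := by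
  induction J using Finset.induction_on with
  | empty => simp [contrib_empty]
  | insert j₀ J hj₀ ih =>
    rw [coe_insert, Set.pairwiseDisjoint_insert_of_notMem (mod_cast hj₀)] at hd
    have hdj : Disjoint (X j₀) (J.biUnion X) :=
      (disjoint_biUnion_right _ _ _).mpr fun l hl => hd.2 l hl
    rw [biUnion_insert] at hbox ⊢
    rw [prod_insert hj₀, ← ih hd.1 fun Y hY hsub => ?_]
    · refine contrib_union hdj fun Y hY hsub => ?_
      obtain ⟨j, hj, hYj⟩ := hbox Y hY hsub
      rcases mem_insert.mp hj with rfl | hj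
      · exact Or.inl hYj
      · exact Or.inr (hYj.trans (subset_biUnion_of_mem X hj))
    · obtain ⟨j, hj, hYj⟩ := hbox Y hY (hsub.trans subset_union_right)
      rcases mem_insert.mp hj with rfl | hj
      · obtain ⟨u, hu⟩ := hY.nonempty
        exact absurd (hsub hu) (disjoint_left.mp hdj (hYj hu))
      · exact ⟨j, hj, hYj⟩

end Boxing

section Windows

variable {n m : ℕ} {S : Fin n → Fin n → Finset ℤ} {T : PlaneTree n m} {v w : ℕ → Fin n}

theorem IsSCadetWindow.mono {a b a' b' : ℕ} (h : IsSCadetWindow S T v a b) (ha : a ≤ a')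
    (hab : a' ≤ b') (hb : b' ≤ b) : IsSCadetWindow S T v a' b' :=
  ⟨⟨h.1.1.trans ha, hab, fun p hp₁ hp₂ => h.1.2.2 p (ha.trans_lt hp₁) (hp₂.trans hb)⟩,
    fun i j hi hij hj => h.2 i j (ha.trans hi) hij (hj.trans hb)⟩

theorem IsSCadetWindow.shift {a b d : ℕ} (h : IsSCadetWindow S T w a b)
    (hwv : ∀ q, a ≤ q → q ≤ b → w q = v (q + d)) :
    IsSCadetWindow S T v (a + d) (b + d) := by
  have hvw : ∀ p, a + d ≤ p → p ≤ b + d → v p = w (p - d) := fun p h₁ h₂ => by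
    rw [hwv (p - d) (by omega) (by omega), Nat.sub_add_cancel (by omega)]
  refine ⟨⟨by have := h.1.1; omega, by have := h.1.2.1; omega, fun p hp₁ hp₂ => ?_⟩,
    fun i j hi hij hj => ?_⟩
  · rw [hvw p (by omega) hp₂, hvw (p - 1) (by omega) (by omega)]
    convert h.1.2.2 (p - d) (by omega) (by omega) using 2
    omega
  · have hsum : ∑ p ∈ Icc (i + 1) j, T.lsib (v p) =
        ∑ q ∈ Icc (i - d + 1) (j - d), T.lsib (w q) := by
      have hIcc : Icc (i + 1) j = (Icc (i - d + 1) (j - d)).map (addRightEmbedding d) := by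
        rw [map_add_right_Icc]
        congr 1 <;> omega
      rw [hIcc, sum_map]
      refine sum_congr rfl fun q hq => ?_
      rw [mem_Icc] at hq
      rw [addRightEmbedding_apply, hwv q (by omega) (by omega)]
    rw [hsum, hvw i hi (by omega), hvw j (by omega) hj]
    exact h.2 (i - d) (j - d) (by omega) (by omega) (by omega)

variable {k : ℕ}

theorem IsMaxCadetSeq.isCadetWindow_eq_shift (hmax : IsMaxCadetSeq T k v) {r d : ℕ}
    (hw : IsCadetWindow T w 1 r) (hdk : 1 + d ≤ k) (hw₁ : w 1 = v (1 + d)) :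
    ∀ q, 1 ≤ q → q ≤ r → q + d ≤ k ∧ w q = v (q + d) := by
  intro q hq
  induction q, hq using Nat.le_induction with
  | base => exact fun _ => ⟨hdk, hw₁⟩
  | succ q hq ih =>
    intro hqr
    obtain ⟨hqk, hwq⟩ := ih (by omega)
    have hcad : T.IsCadet (v (q + d)) (w (q + 1)) := by
      simpa [hwq] using hw.2.2 (q + 1) (by omega) hqr
    -- `v k` has no children, so the cadet of `v (q + d)` forces `q + d < k`
    have hqk' : q + d < k := hqk.lt_of_ne fun h => hmax.2.1 _ (h ▸ hcad.1)
    have hcad' : T.IsCadet (v (q + d)) (v (q + 1 + d)) := by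
      simpa [Nat.add_right_comm q 1 d] using hmax.1.2.2 (q + 1 + d) (by omega) (by omega)
    exact ⟨by omega, hcad.unique hcad'⟩

theorem IsSBox.exists_window (hmax : IsMaxCadetSeq T k v) {Y : Finset (Fin n)}
    (hY : IsSBox S T Y) (hsub : Y ⊆ (Icc 1 k).image v) :
    ∃ c d, d ≤ k ∧ IsSCadetWindow S T v c d ∧ Y = (Icc c d).image v := by
  obtain ⟨r, w, hw, -, rfl⟩ := hY
  have hr : 1 ≤ r := hw.1.2.1
  obtain ⟨c, hc, hwc⟩ := mem_image.mp (hsub (mem_image_of_mem w (mem_Icc.mpr ⟨le_rfl, hr⟩)))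
  rw [mem_Icc] at hc
  have hshift := hmax.isCadetWindow_eq_shift hw.1 (d := c - 1) (by omega)
    (by rw [← hwc]; congr 1; omega)
  refine ⟨1 + (c - 1), r + (c - 1), (hshift r hr le_rfl).1,
    hw.shift fun q h₁ h₂ => (hshift q h₁ h₂).2, ?_⟩
  rw [← image_add_right_Icc, image_image]
  exact image_congr fun q hq => (hshift q (mem_Icc.mp hq).1 (mem_Icc.mp hq).2).2

theorem IsSCadetWindow.exists_isMaxSCadetWindow {c d : ℕ} (hw : IsSCadetWindow S T v c d)
    (hdk : d ≤ k) : ∃ c' d', c' ≤ c ∧ d ≤ d' ∧ IsMaxSCadetWindow S T k v c' d' := by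
  classical
  let P e := d ≤ e ∧ IsSCadetWindow S T v c e
  let d' := Nat.findGreatest P k
  have hd' : P d' := Nat.findGreatest_spec hdk ⟨le_rfl, hw⟩
  have hd'k : d' ≤ k := Nat.findGreatest_le k
  have hex : ∃ e, IsSCadetWindow S T v e d' := ⟨c, hd'.2⟩
  have hc'c : Nat.find hex ≤ c := Nat.find_min' hex hd'.2
  have hc' : IsSCadetWindow S T v (Nat.find hex) d' := Nat.find_spec hex
  refine ⟨Nat.find hex, d', hc'c, hd'.1, hd'k, hc', ?_, ?_⟩
  · refine or_iff_not_imp_left.mpr fun hc'1 => Nat.find_min hex ?_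
    have := hc'.1.1
    omega
  · refine or_iff_not_imp_left.mpr fun hd'k' h => ?_
    refine Nat.findGreatest_is_greatest (lt_add_one d') (by omega) ⟨by omega, ?_⟩
    exact h.mono hc'c (by have := hd'.2.1.2.1; omega) le_rfl

theorem IsSBox.exists_isMaxSCadetSet_superset (hmax : IsMaxCadetSeq T k v)
    (hinj : WindowInj v 1 k) {Y : Finset (Fin n)} (hY : IsSBox S T Y)
    (hsub : Y ⊆ (Icc 1 k).image v) : ∃ Z, IsMaxSCadetSet S T Z ∧ Y ⊆ Z := by
  obtain ⟨c, d, hdk, hw, rfl⟩ := hY.exists_window hmax hsub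
  obtain ⟨c', d', hc', hd', hmaxw⟩ := hw.exists_isMaxSCadetWindow hdk
  exact ⟨_, ⟨k, v, c', d', hmax, hinj, hmaxw, rfl⟩,
    image_subset_image (Icc_subset_Icc hc' hd')⟩

end Windows

/-- Lemma 3.10: the contribution of a maximal cadet sequence equals the
product of the contributions of the `S`-connected cadet sequences into which it is
partitioned. -/
theorem statement_2 {n : ℕ} (S : Fin n → Fin n → Finset ℤ) (T : PlaneTree n (mOf S))
    (k : ℕ) (v : ℕ → Fin n) (hmax : IsMaxCadetSeq T k v) (hinj : WindowInj v 1 k)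
    (t : ℕ) (a b : ℕ → ℕ)
    (hconn : ∀ j, 1 ≤ j → j ≤ t → 1 ≤ a j ∧ a j ≤ b j ∧ b j ≤ k ∧
      SConnected S T ((Finset.Icc (a j) (b j)).image v))
    (hcover : (Finset.Icc 1 t).biUnion (fun j => Finset.Icc (a j) (b j)) = Finset.Icc 1 k)
    (hdisj : ∀ j l, 1 ≤ j → j < l → l ≤ t →
      Disjoint (Finset.Icc (a j) (b j)) (Finset.Icc (a l) (b l))) :
    contrib S T ((Finset.Icc 1 k).image v) =
      ∏ j ∈ Finset.Icc 1 t, contrib S T ((Finset.Icc (a j) (b j)).image v) := by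
  have hX : (Finset.Icc 1 k).image v =
      (Finset.Icc 1 t).biUnion fun j => (Finset.Icc (a j) (b j)).image v := by
    rw [← hcover, biUnion_image]
  have hinjOn : Set.InjOn v (Icc 1 k) := fun p hp q hq =>
    hinj p q (mem_Icc.mp hp).1 (mem_Icc.mp hp).2 (mem_Icc.mp hq).1 (mem_Icc.mp hq).2
  rw [hX]
  refine contrib_biUnion (fun j hj l hl hjl => ?_) fun Y hY hsub => ?_
  · have hpiece : ∀ i ∈ Icc 1 t, Icc (a i) (b i) ⊆ Icc 1 k := fun i hi =>
      hcover ▸ subset_biUnion_of_mem (fun j => Icc (a j) (b j)) hi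
    refine disjoint_image_of_injOn hinjOn (hpiece j hj) (hpiece l hl) ?_
    rcases hjl.lt_or_gt with h | h
    · exact hdisj j l (mem_Icc.mp hj).1 h (mem_Icc.mp hl).2
    · exact (hdisj l j (mem_Icc.mp hl).1 h (mem_Icc.mp hj).2).symm
  · obtain ⟨Z, hZ, hYZ⟩ := hY.exists_isMaxSCadetSet_superset hmax hinj (hX ▸ hsub)
    obtain ⟨u, hu⟩ := hY.nonempty
    obtain ⟨j, hj, huj⟩ := mem_biUnion.mp (hsub hu)
    refine ⟨j, hj, ?_⟩
    rcases ((hconn j (mem_Icc.mp hj).1 (mem_Icc.mp hj).2).2.2.2.2.1 Z hZ) with h | h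
    · exact absurd h (nonempty_iff_ne_empty.mp ⟨u, mem_inter.mpr ⟨huj, hYZ hu⟩⟩)
    · exact hYZ.trans h
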